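/- arXiv:2308.06690 — 2 statements merged into one kernel-verified Lean document; each statement's English description precedes it below -/
import Mathlib

section
/- (Theorem 1) Let (x, y) be a pair of unimodular complex sequences of length N forming a Golay complementary pair, and let (a, b) be a pair of unimodular complex sequences of length L forming an (L, Z)-Z-complementary pair, where 1 ≤ Z ≤ L. Define four L×N complex arrays by X₁[i,j] = a_i·x_j, X₂[i,j] = b_i·y_j, X₃[i,j] = −a_i·conj(y_{N-1-j}), and X₄[i,j] = b_i·conj(x_{N-1-j}). Then {X₁, X₂, X₃, X₄} is a 2D Z-complementary array quad with array size L×N and 2D zero-correlation-zone width Z×N; that is, each array is unimodular, ρ_{X₁}(0,0) + ρ_{X₂}(0,0) + ρ_{X₃}(0,0) + ρ_{X₄}(0,0) = 4LN, and for all integer shifts (τ₁, τ₂) ≠ (0,0) with |τ₁| ≤ Z−1 and |τ₂| ≤ N−1, ρ_{X₁}(τ₁,τ₂) + ρ_{X₂}(τ₁,τ₂) + ρ_{X₃}(τ₁,τ₂) + ρ_{X₄}(τ₁,τ₂) = 0. -/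
/-!
Each of the four arrays is an outer product `u ⊗ v`, so its 2D autocorrelation at `(τ₁, τ₂)`
is `ρ_u(τ₁) ρ_v(τ₂)`; conjugate reversal and negation leave 1D autocorrelations unchanged. Hence
the four 2D autocorrelations add up to `(ρ_a + ρ_b)(τ₁) · (ρ_x + ρ_y)(τ₂)`, whose first factor
vanishes for `0 < |τ₁| < Z` (ZCP) and second for `0 < |τ₂| < N` (GCP); at `(0, 0)` it is
`2L · 2N` by unimodularity.
-/

open Finset

noncomputable section

/-- 1D aperiodic autocorrelation of a length-`N` complex sequence at integer shift `τ`: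
`ρ_x(τ) = Σ x_j * conj (x_{j+τ})`, summed over all `j` with `j` and `j + τ` in `[0, N)`. -/
def acorr (N : ℕ) (x : ℕ → ℂ) (τ : ℤ) : ℂ :=
  ∑ j ∈ Finset.range N,
    if 0 ≤ (j : ℤ) + τ ∧ (j : ℤ) + τ < (N : ℤ) then
      x j * star (x ((j : ℤ) + τ).toNat)
    else 0

/-- 2D aperiodic autocorrelation of an `N₁ × N₂` complex array at integer shifts `(τ₁, τ₂)`. -/
def acorr2 (N₁ N₂ : ℕ) (X : ℕ → ℕ → ℂ) (τ₁ τ₂ : ℤ) : ℂ :=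
  ∑ i ∈ Finset.range N₁, ∑ j ∈ Finset.range N₂,
    if (0 ≤ (i : ℤ) + τ₁ ∧ (i : ℤ) + τ₁ < (N₁ : ℤ)) ∧
       (0 ≤ (j : ℤ) + τ₂ ∧ (j : ℤ) + τ₂ < (N₂ : ℤ)) then
      X i j * star (X ((i : ℤ) + τ₁).toNat ((j : ℤ) + τ₂).toNat)
    else 0

/-- Peak-to-mean envelope power ratio of a length-`L` complex sequence:
`sup_{t ∈ [0,1]} (1/L) * |Σ_{i<L} c_i exp(2π√-1 i t)|²`. -/
def pmepr (L : ℕ) (c : ℕ → ℂ) : ℝ :=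
  ⨆ t : Set.Icc (0 : ℝ) 1,
    (‖∑ i ∈ Finset.range L,
      c i * Complex.exp (2 * Real.pi * Complex.I * (i : ℂ) * ((t : ℝ) : ℂ))‖) ^ 2 / L


theorem acorr_neg (N : ℕ) (x : ℕ → ℂ) (τ : ℤ) :
    acorr N (fun j => -x j) τ = acorr N x τ := by
  unfold acorr
  refine sum_congr rfl fun j _ => ?_
  split_ifs <;> simp

theorem acorr_star_reverse (N : ℕ) (x : ℕ → ℂ) (τ : ℤ) :
    acorr N (fun j => star (x (N - 1 - j))) τ = acorr N x τ := by
  unfold acorr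
  rw [← sum_filter, ← sum_filter]
  -- the term at `j` becomes the term at `N - 1 - j - τ`
  refine sum_nbij' (fun j => ((N : ℤ) - 1 - j - τ).toNat)
    (fun m => ((N : ℤ) - 1 - m - τ).toNat) ?_ ?_ ?_ ?_ ?_ <;>
    intro j hj <;> simp only [mem_filter, mem_range] at hj ⊢
  all_goals try omega
  have e1 : N - 1 - ((j : ℤ) + τ).toNat = ((N : ℤ) - 1 - j - τ).toNat := by omega
  have e2 : ((((N : ℤ) - 1 - j - τ).toNat : ℤ) + τ).toNat = N - 1 - j := by omega
  rw [star_star, e1, e2, mul_comm]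

theorem acorr_zero_of_norm_eq_one (N : ℕ) (x : ℕ → ℂ) (hx : ∀ j < N, ‖x j‖ = 1) :
    acorr N x 0 = N := by
  unfold acorr
  trans ∑ _j ∈ range N, (1 : ℂ)
  · refine sum_congr rfl fun j hj => ?_
    rw [mem_range] at hj
    rw [if_pos (by omega), add_zero, Int.toNat_natCast, Complex.star_def, Complex.mul_conj',
      hx j hj]
    norm_num
  · simp

theorem acorr2_outer (N₁ N₂ : ℕ) (u v : ℕ → ℂ) (τ₁ τ₂ : ℤ) :
    acorr2 N₁ N₂ (fun i j => u i * v j) τ₁ τ₂ = acorr N₁ u τ₁ * acorr N₂ v τ₂ := by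
  unfold acorr2 acorr
  rw [sum_mul_sum]
  refine sum_congr rfl fun i _ => sum_congr rfl fun j _ => ?_
  split_ifs <;> simp_all [star_mul']
  ring

theorem acorr2_quad_sum (L N : ℕ) (x y a b : ℕ → ℂ) (τ₁ τ₂ : ℤ) :
    acorr2 L N (fun i j => a i * x j) τ₁ τ₂ +
        acorr2 L N (fun i j => b i * y j) τ₁ τ₂ +
        acorr2 L N (fun i j => -(a i * star (y (N - 1 - j)))) τ₁ τ₂ +
        acorr2 L N (fun i j => b i * star (x (N - 1 - j))) τ₁ τ₂ =
      (acorr L a τ₁ + acorr L b τ₁) * (acorr N x τ₂ + acorr N y τ₂) := by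
  simp_rw [← mul_neg, acorr2_outer, acorr_neg, acorr_star_reverse]
  ring

theorem stmt_4_general (L N Z : ℕ) (x y a b : ℕ → ℂ)
    (hx : ∀ j < N, ‖x j‖ = 1) (hy : ∀ j < N, ‖y j‖ = 1)
    (ha : ∀ i < L, ‖a i‖ = 1) (hb : ∀ i < L, ‖b i‖ = 1)
    (hGCP : ∀ τ : ℤ, 1 ≤ |τ| → |τ| ≤ (N : ℤ) - 1 → acorr N x τ + acorr N y τ = 0)
    (hZCP : ∀ τ : ℤ, 1 ≤ |τ| → |τ| ≤ (Z : ℤ) - 1 → acorr L a τ + acorr L b τ = 0) :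
    (∀ i < L, ∀ j < N,
      ‖a i * x j‖ = 1 ∧
      ‖b i * y j‖ = 1 ∧
      ‖-(a i * star (y (N - 1 - j)))‖ = 1 ∧
      ‖b i * star (x (N - 1 - j))‖ = 1) ∧
    (acorr2 L N (fun i j => a i * x j) 0 0 +
      acorr2 L N (fun i j => b i * y j) 0 0 +
      acorr2 L N (fun i j => -(a i * star (y (N - 1 - j)))) 0 0 +
      acorr2 L N (fun i j => b i * star (x (N - 1 - j))) 0 0 = 4 * (L : ℂ) * (N : ℂ)) ∧
    (∀ τ₁ τ₂ : ℤ, (τ₁, τ₂) ≠ (0, 0) → |τ₁| ≤ (Z : ℤ) - 1 → |τ₂| ≤ (N : ℤ) - 1 →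
      acorr2 L N (fun i j => a i * x j) τ₁ τ₂ +
        acorr2 L N (fun i j => b i * y j) τ₁ τ₂ +
        acorr2 L N (fun i j => -(a i * star (y (N - 1 - j)))) τ₁ τ₂ +
        acorr2 L N (fun i j => b i * star (x (N - 1 - j))) τ₁ τ₂ = 0) := by
  refine ⟨fun i hi j hj => ?_, ?_, fun τ₁ τ₂ hτ h₁ h₂ => ?_⟩
  · have hj' : N - 1 - j < N := by omega
    simp [ha i hi, hb i hi, hx j hj, hy j hj, hx _ hj', hy _ hj']
  · rw [acorr2_quad_sum, acorr_zero_of_norm_eq_one L a ha, acorr_zero_of_norm_eq_one L b hb,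
      acorr_zero_of_norm_eq_one N x hx, acorr_zero_of_norm_eq_one N y hy]
    ring
  · rw [acorr2_quad_sum]
    by_cases hτ₂ : τ₂ = 0
    · have hτ₁ : τ₁ ≠ 0 := by rintro rfl; exact hτ (by rw [hτ₂])
      rw [hZCP τ₁ (Int.one_le_abs hτ₁) h₁, zero_mul]
    · rw [hGCP τ₂ (Int.one_le_abs hτ₂) h₂, mul_zero]

/-- Theorem 1: from a unimodular GCP `(x, y)` of length `N` and a
unimodular `(L, Z)`-ZCP `(a, b)`, the four arrays `X₁[i,j] = a_i x_j`,
`X₂[i,j] = b_i y_j`, `X₃[i,j] = -a_i conj (y_{N-1-j})`, `X₄[i,j] = b_i conj (x_{N-1-j})`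
form a 2D-ZCAQ of size `L × N` with 2D-ZCZ width `Z × N`. -/
theorem stmt_4 (L N Z : ℕ) (x y a b : ℕ → ℂ)
    (hx : ∀ j < N, ‖x j‖ = 1) (hy : ∀ j < N, ‖y j‖ = 1)
    (ha : ∀ i < L, ‖a i‖ = 1) (hb : ∀ i < L, ‖b i‖ = 1)
    (hZ1 : 1 ≤ Z) (hZL : Z ≤ L)
    (hGCP : ∀ τ : ℤ, 1 ≤ |τ| → |τ| ≤ (N : ℤ) - 1 → acorr N x τ + acorr N y τ = 0)
    (hZCP : ∀ τ : ℤ, 1 ≤ |τ| → |τ| ≤ (Z : ℤ) - 1 → acorr L a τ + acorr L b τ = 0) :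
    (∀ i < L, ∀ j < N,
      ‖a i * x j‖ = 1 ∧
      ‖b i * y j‖ = 1 ∧
      ‖-(a i * star (y (N - 1 - j)))‖ = 1 ∧
      ‖b i * star (x (N - 1 - j))‖ = 1) ∧
    (acorr2 L N (fun i j => a i * x j) 0 0 +
      acorr2 L N (fun i j => b i * y j) 0 0 +
      acorr2 L N (fun i j => -(a i * star (y (N - 1 - j)))) 0 0 +
      acorr2 L N (fun i j => b i * star (x (N - 1 - j))) 0 0 = 4 * (L : ℂ) * (N : ℂ)) ∧
    (∀ τ₁ τ₂ : ℤ, (τ₁, τ₂) ≠ (0, 0) → |τ₁| ≤ (Z : ℤ) - 1 → |τ₂| ≤ (N : ℤ) - 1 →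
      acorr2 L N (fun i j => a i * x j) τ₁ τ₂ +
        acorr2 L N (fun i j => b i * y j) τ₁ τ₂ +
        acorr2 L N (fun i j => -(a i * star (y (N - 1 - j)))) τ₁ τ₂ +
        acorr2 L N (fun i j => b i * star (x (N - 1 - j))) τ₁ τ₂ = 0) :=
  stmt_4_general L N Z x y a b hx hy ha hb hGCP hZCP

end
end

section
/- (Proposition 3) Let n ≥ 0 be an integer and L = 2^{n+3} + 2^{n+2} + 2^{n+1}. Let a, b be unimodular complex sequences of length L whose aperiodic autocorrelation sum satisfies ρ_a(τ) + ρ_b(τ) = 0 for every τ with 1 ≤ τ ≤ L−1 that is not of the form τ = 2^{n+3} + l·2^{n+1} with l ∈ {0,1,2}, and |ρ_a(τ) + ρ_b(τ)| ≤ 2^{n+2} for each τ = 2^{n+3} + l·2^{n+1} with l ∈ {0,1,2}. Let x, y be unimodular complex sequences of length N, and define four L×N complex arrays by X₁[i,j] = a_i·x_j, X₂[i,j] = b_i·y_j, X₃[i,j] = −a_i·conj(y_{N-1-j}), and X₄[i,j] = b_i·conj(x_{N-1-j}). Then every column sequence of each X_m (m ∈ {1,2,3,4}) has PMEPR at most 26/7.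 -/
open Finset

noncomputable section

/-!
Write `A(z) = Σ aᵢ zⁱ` and `B(z) = Σ bᵢ zⁱ` for `|z| = 1`. Expanding the squared moduli,
`|A(z)|² + |B(z)|² = 2L + 2 Re Σ_{τ ≥ 1} (ρ_a(τ) + ρ_b(τ)) z̄^τ`, and only the three shifts
`τ = 4K, 5K, 6K` (with `K = 2^{n+1}`, `L = 7K`) contribute, each by at most `2K`. Hence
`|A(z)|² ≤ 14K + 12K = 26K = (26/7) L`, and likewise for `B`. Every column of the four arrays
is `a` or `b` multiplied by a unimodular constant, which does not change the PMEPR.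
-/

lemma sum_range_sum_range_eq_diag_add_lt {M : Type*} [AddCommMonoid M] (L : ℕ)
    (g : ℕ → ℕ → M) :
    ∑ i ∈ range L, ∑ k ∈ range L, g i k =
      ∑ i ∈ range L, g i i + ∑ k ∈ range L, ∑ i ∈ range k, (g i k + g k i) := by
  induction L with
  | zero => simp
  | succ L ih =>
    simp only [sum_range_succ, sum_add_distrib] at *
    rw [ih]
    abel

lemma sum_range_sum_range_lt_eq_sum_shift {M : Type*} [AddCommMonoid M] (L : ℕ)
    (g : ℕ → ℕ → M) :
    ∑ k ∈ range L, ∑ i ∈ range k, g i k =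
      ∑ τ ∈ Ico 1 L, ∑ i ∈ range (L - τ), g i (i + τ) := by
  rw [sum_sigma', sum_sigma']
  refine sum_nbij' (fun p => ⟨p.1 - p.2, p.2⟩) (fun q => ⟨q.2 + q.1, q.2⟩) ?_ ?_ ?_ ?_ ?_
  all_goals
    rintro ⟨_, _⟩ h
    simp only [mem_sigma, mem_range, mem_Ico] at *
  · omega
  · omega
  · simp only [Sigma.mk.injEq, heq_eq_eq, and_true]; omega
  · simp
  · congr 1; omega

lemma acorr_natCast (L τ : ℕ) (c : ℕ → ℂ) :
    acorr L c τ = ∑ i ∈ range (L - τ), c i * star (c (i + τ)) := by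
  unfold acorr
  rw [← sum_subset (range_subset_range.mpr (Nat.sub_le L τ))]
  · refine sum_congr rfl fun j hj => ?_
    rw [mem_range] at hj
    rw [if_pos (by omega)]
    congr 3
  · intro j hj hj'
    simp only [mem_range] at hj hj'
    rw [if_neg (by omega)]

lemma sum_shift_mul_pow_eq_acorr_mul {z : ℂ} (hz : ‖z‖ = 1) (L τ : ℕ) (c : ℕ → ℂ) :
    ∑ i ∈ range (L - τ), c i * z ^ i * star (c (i + τ) * z ^ (i + τ)) =
      acorr L c τ * star z ^ τ := by
  have hzz : z * star z = 1 := by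
    rw [Complex.star_def, Complex.mul_conj', hz]
    norm_num
  rw [acorr_natCast, sum_mul]
  refine sum_congr rfl fun i _ => ?_
  have hzi : z ^ i * star z ^ i = 1 := by rw [← mul_pow, hzz, one_pow]
  rw [star_mul', star_pow, pow_add]
  linear_combination (c i * star (c (i + τ)) * star z ^ τ) * hzi

theorem norm_sum_mul_pow_sq {z : ℂ} (hz : ‖z‖ = 1) (L : ℕ) (c : ℕ → ℂ) :
    ‖∑ i ∈ range L, c i * z ^ i‖ ^ 2 =
      ∑ i ∈ range L, ‖c i‖ ^ 2 + 2 * ∑ τ ∈ Ico 1 L, (acorr L c τ * star z ^ τ).re := by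
  set g : ℕ → ℕ → ℂ := fun i k => c i * z ^ i * star (c k * z ^ k)
  have hsq : ‖∑ i ∈ range L, c i * z ^ i‖ ^ 2 = ∑ i ∈ range L, ∑ k ∈ range L, (g i k).re := by
    rw [← Complex.ofReal_re (_ ^ 2), Complex.ofReal_pow, ← Complex.mul_conj', ← Complex.star_def,
      star_sum, sum_mul_sum]
    simp only [Complex.re_sum, g]
  have hdiag : ∀ i, (g i i).re = ‖c i‖ ^ 2 := by
    intro i
    simp only [g, Complex.star_def, Complex.mul_conj', norm_mul, norm_pow, hz, one_pow, mul_one]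
    norm_cast
  have hsymm : ∀ i τ, (g (i + τ) i).re = (g i (i + τ)).re := by
    intro i τ
    rw [show g (i + τ) i = star (g i (i + τ)) by simp only [g, star_mul', star_star]; ring,
      Complex.star_def, Complex.conj_re]
  rw [hsq, sum_range_sum_range_eq_diag_add_lt, sum_range_sum_range_lt_eq_sum_shift]
  simp only [hdiag, hsymm, ← two_mul, ← mul_sum, ← Complex.re_sum, g,
    sum_shift_mul_pow_eq_acorr_mul hz]

lemma norm_sq_add_norm_sq_le {L : ℕ} {a b : ℕ → ℂ} (ha : ∀ i < L, ‖a i‖ = 1)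
    (hb : ∀ i < L, ‖b i‖ = 1) {z : ℂ} (hz : ‖z‖ = 1) :
    ‖∑ i ∈ range L, a i * z ^ i‖ ^ 2 + ‖∑ i ∈ range L, b i * z ^ i‖ ^ 2 ≤
      2 * L + 2 * ∑ τ ∈ Ico 1 L, ‖acorr L a τ + acorr L b τ‖ := by
  have hunimod : ∀ c : ℕ → ℂ, (∀ i < L, ‖c i‖ = 1) → ∑ i ∈ range L, ‖c i‖ ^ 2 = L :=
    fun c hc => by
      rw [sum_congr rfl fun i hi => by rw [hc i (mem_range.1 hi), one_pow], sum_const,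
        card_range, nsmul_one]
  have hcross : ∑ τ ∈ Ico 1 L, (acorr L a τ * star z ^ τ).re +
      ∑ τ ∈ Ico 1 L, (acorr L b τ * star z ^ τ).re ≤
        ∑ τ ∈ Ico 1 L, ‖acorr L a τ + acorr L b τ‖ := by
    rw [← sum_add_distrib]
    refine sum_le_sum fun τ _ => ?_
    calc _ = ((acorr L a τ + acorr L b τ) * star z ^ τ).re := by rw [add_mul, Complex.add_re]
      _ ≤ ‖(acorr L a τ + acorr L b τ) * star z ^ τ‖ := Complex.re_le_norm _
      _ = _ := by rw [norm_mul, norm_pow, norm_star, hz, one_pow, mul_one]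
  rw [norm_sum_mul_pow_sq hz, norm_sum_mul_pow_sq hz, hunimod a ha, hunimod b hb]
  linarith

lemma exp_two_pi_I_mul_natCast_mul (i : ℕ) (t : ℝ) :
    Complex.exp (2 * Real.pi * Complex.I * i * t) =
      Complex.exp (2 * Real.pi * Complex.I * t) ^ i := by
  rw [← Complex.exp_nat_mul]
  ring_nf

lemma norm_exp_two_pi_I_mul (t : ℝ) : ‖Complex.exp (2 * Real.pi * Complex.I * t)‖ = 1 := by
  rw [show 2 * Real.pi * Complex.I * t = ((2 * Real.pi * t : ℝ) : ℂ) * Complex.I by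
    push_cast; ring]
  exact Complex.norm_exp_ofReal_mul_I _

lemma pmepr_le_of_norm_sq_le {L : ℕ} (hL : 0 < L) {c : ℕ → ℂ} {B : ℝ}
    (h : ∀ z : ℂ, ‖z‖ = 1 → ‖∑ i ∈ range L, c i * z ^ i‖ ^ 2 ≤ B * L) : pmepr L c ≤ B := by
  have : Nonempty (Set.Icc (0 : ℝ) 1) := ⟨⟨0, by norm_num⟩⟩
  refine ciSup_le fun t => ?_
  rw [div_le_iff₀ (by positivity)]
  simpa only [exp_two_pi_I_mul_natCast_mul] using h _ (norm_exp_two_pi_I_mul t)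

lemma pmepr_mul_const (L : ℕ) (c : ℕ → ℂ) {u : ℂ} (hu : ‖u‖ = 1) :
    pmepr L (fun i => c i * u) = pmepr L c := by
  unfold pmepr
  congr 1
  funext t
  simp only [mul_right_comm _ u, ← sum_mul, norm_mul, hu, mul_one]

theorem pmepr_le_of_sum_norm_acorr_add_le {L : ℕ} (hL : 0 < L) {a b : ℕ → ℂ}
    (ha : ∀ i < L, ‖a i‖ = 1) (hb : ∀ i < L, ‖b i‖ = 1) {C : ℝ}
    (hC : ∑ τ ∈ Ico 1 L, ‖acorr L a τ + acorr L b τ‖ ≤ C) :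
    pmepr L a ≤ (2 * L + 2 * C) / L :=
  pmepr_le_of_norm_sq_le hL fun z hz => by
    rw [div_mul_cancel₀ _ (by positivity)]
    linarith [norm_sq_add_norm_sq_le ha hb hz, sq_nonneg ‖∑ i ∈ range L, b i * z ^ i‖]

lemma sum_norm_acorr_add_le (n L : ℕ) (hL : L = 2 ^ (n + 3) + 2 ^ (n + 2) + 2 ^ (n + 1))
    (a b : ℕ → ℂ)
    (hzero : ∀ τ : ℤ, 1 ≤ τ → τ ≤ (L : ℤ) - 1 →
      (∀ l : ℤ, 0 ≤ l → l ≤ 2 → τ ≠ 2 ^ (n + 3) + l * 2 ^ (n + 1)) →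
      acorr L a τ + acorr L b τ = 0)
    (hpeak : ∀ l : ℤ, 0 ≤ l → l ≤ 2 →
      ‖acorr L a (2 ^ (n + 3) + l * 2 ^ (n + 1)) +
        acorr L b (2 ^ (n + 3) + l * 2 ^ (n + 1))‖ ≤ 2 ^ (n + 2)) :
    ∑ τ ∈ Ico 1 L, ‖acorr L a τ + acorr L b τ‖ ≤ 3 * 2 ^ (n + 2) := by
  set K := 2 ^ (n + 1)
  have hK : 0 < K := by positivity
  have hLK : L = 7 * K := by rw [hL]; ring
  have hshift : ∀ l : ℕ, (2 : ℤ) ^ (n + 3) + l * 2 ^ (n + 1) = ((4 + l) * K : ℕ) := by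
    intro l; push_cast [K]; ring
  set S := (range 3).image fun l => (4 + l) * K
  have hsub : S ⊆ Ico 1 L := by
    simp only [S, subset_iff, mem_image, mem_range, mem_Ico]
    rintro _ ⟨l, hl, rfl⟩
    constructor <;> nlinarith
  have hvanish : ∀ τ ∈ Ico 1 L, τ ∉ S → ‖acorr L a τ + acorr L b τ‖ = 0 := by
    intro τ hτ hτS
    rw [mem_Ico] at hτ
    refine norm_eq_zero.2 (hzero τ (by exact_mod_cast hτ.1) (by omega) fun l hl0 hl2 heq => ?_)
    lift l to ℕ using hl0
    rw [hshift] at heq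
    exact hτS (mem_image.2 ⟨l, mem_range.2 (by omega), by exact_mod_cast heq.symm⟩)
  have hbound : ∀ τ ∈ S, ‖acorr L a τ + acorr L b τ‖ ≤ 2 ^ (n + 2) := by
    simp only [S, mem_image, mem_range]
    rintro _ ⟨l, hl, rfl⟩
    simpa only [hshift] using hpeak l (by positivity) (by omega)
  calc ∑ τ ∈ Ico 1 L, ‖acorr L a τ + acorr L b τ‖
      = ∑ τ ∈ S, ‖acorr L a τ + acorr L b τ‖ := (sum_subset hsub hvanish).symm
    _ ≤ S.card • (2 : ℝ) ^ (n + 2) := sum_le_card_nsmul _ _ _ hbound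
    _ ≤ 3 * 2 ^ (n + 2) := by
      rw [nsmul_eq_mul]
      gcongr
      exact_mod_cast card_image_le.trans (card_range 3).le

/-- Proposition 3: with `L = 2^{n+3} + 2^{n+2} + 2^{n+1}` and a unimodular
pair `(a, b)` whose autocorrelation sum vanishes for every `1 ≤ τ ≤ L-1` not of the form
`2^{n+3} + l·2^{n+1}` with `l ∈ {0,1,2}`, and is bounded in modulus by `2^{n+2}` at each
such `τ`, every column sequence of each of the four arrays has PMEPR at most `26/7`. -/
theorem stmt_11 (n N : ℕ) (L : ℕ) (hL : L = 2 ^ (n + 3) + 2 ^ (n + 2) + 2 ^ (n + 1))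
    (a b x y : ℕ → ℂ)
    (ha : ∀ i < L, ‖a i‖ = 1) (hb : ∀ i < L, ‖b i‖ = 1)
    (hx : ∀ j < N, ‖x j‖ = 1) (hy : ∀ j < N, ‖y j‖ = 1)
    (hzero : ∀ τ : ℤ, 1 ≤ τ → τ ≤ (L : ℤ) - 1 →
      (∀ l : ℤ, 0 ≤ l → l ≤ 2 → τ ≠ 2 ^ (n + 3) + l * 2 ^ (n + 1)) →
      acorr L a τ + acorr L b τ = 0)
    (hpeak : ∀ l : ℤ, 0 ≤ l → l ≤ 2 →
      ‖acorr L a (2 ^ (n + 3) + l * 2 ^ (n + 1)) +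
        acorr L b (2 ^ (n + 3) + l * 2 ^ (n + 1))‖ ≤ 2 ^ (n + 2)) :
    ∀ j < N,
      pmepr L (fun i => a i * x j) ≤ 26 / 7 ∧
      pmepr L (fun i => b i * y j) ≤ 26 / 7 ∧
      pmepr L (fun i => -(a i * star (y (N - 1 - j)))) ≤ 26 / 7 ∧
      pmepr L (fun i => b i * star (x (N - 1 - j))) ≤ 26 / 7 := by
  intro j hj
  have hLK : L = 7 * 2 ^ (n + 1) := by rw [hL]; ring
  have hLpos : 0 < L := by rw [hLK]; positivity
  have hC := sum_norm_acorr_add_le n L hL a b hzero hpeak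
  have h26 : (2 * (L : ℝ) + 2 * (3 * 2 ^ (n + 2))) / L = 26 / 7 := by
    rw [hLK]; push_cast; field_simp; ring
  have hA : pmepr L a ≤ 26 / 7 := h26 ▸ pmepr_le_of_sum_norm_acorr_add_le hLpos ha hb hC
  have hB : pmepr L b ≤ 26 / 7 :=
    h26 ▸ pmepr_le_of_sum_norm_acorr_add_le hLpos hb ha (by simpa only [add_comm] using hC)
  have hrev : N - 1 - j < N := by omega
  refine ⟨?_, ?_, ?_, ?_⟩
  · rwa [pmepr_mul_const L a (hx j hj)]
  · rwa [pmepr_mul_const L b (hy j hj)]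
  · simp_rw [← mul_neg]
    rwa [pmepr_mul_const L a (by rw [norm_neg, norm_star]; exact hy _ hrev)]
  · rwa [pmepr_mul_const L b (by rw [norm_star]; exact hx _ hrev)]
end
end
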